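/- Let n = 2m with m ≥ 2, let P_n be the regular n-gon, let a = cos(π/n), w = 2a, and let â = (cos(π/n), sin(π/n)) be the unit outward normal to one of the edges. Let x ∈ P_n be a point with ⟨x, â⟩ = 0 (so x lies on the line through the center halfway between the two parallel edges perpendicular to â) and x ≠ (0,0). Then the two copies of x on opposite faces of the double of P_n are at distance strictly less than w: D((0,x),(1,x)) < w. Consequently, a closed curve of period 2w passing through (0,x) and (1,x) at parameters differing by w cannot be a half-geodesic. -/

import Mathlib

open Real

noncomputable section

/-- The Euclidean plane. -/
abbrev E2 : Type := EuclideanSpace ℝ (Fin 2)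

/-- The point `(x, y)` in the Euclidean plane. -/
def pt (x y : ℝ) : E2 := WithLp.toLp 2 ![x, y]

/-- The regular `n`-gon: the convex hull of the `n`-th roots of unity. -/
def Pgon (n : ℕ) : Set E2 :=
  convexHull ℝ
    (Set.range fun k : Fin n => pt (Real.cos (2 * π * k / n)) (Real.sin (2 * π * k / n)))

/-- The pseudometric of the double of a plane set `P`: two points on the same
face are at their Euclidean distance, while points on opposite faces are at
the infimum over boundary points `z ∈ ∂P` of `‖x - z‖ + ‖z - y‖`. -/
def doubleDist (P : Set E2) (p q : Bool × E2) : ℝ :=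
  if p.1 = q.1 then ‖p.2 - q.2‖
  else sInf ((fun z => ‖p.2 - z‖ + ‖z - q.2‖) '' frontier P)

/-- The unit outward normal to the `k`-th edge of the regular `n`-gon. -/
def outNormal (n k : ℕ) : E2 :=
  pt (Real.cos ((2 * k + 1) * π / n)) (Real.sin ((2 * k + 1) * π / n))

/-- The `k`-th meridian of the double of the regular `n`-gon (`n` even),
periodic of period `2w` where `w = 2 cos(π/n)`: it runs through the center of
the top face from the midpoint `m_k = a • â_k` of the `k`-th edge to the
midpoint of the opposite edge, then back through the bottom face. -/
def meridian (n k : ℕ) (t : ℝ) : Bool × E2 :=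
  let a := Real.cos (π / n)
  let w := 2 * a
  let t' := t - 2 * w * (⌊t / (2 * w)⌋ : ℝ)
  if t' < w then (false, a • outNormal n k - t' • outNormal n k)
  else (true, -(a • outNormal n k) + (t' - w) • outNormal n k)

/-! Let `θ = π / n` and `a = cos θ`. The midpoint `a • â_k` of the `k`-th edge lies on the boundary of
`P_n`, so `D((0,x),(1,x)) ≤ 2 ‖x - a • â_k‖`, and `‖x - a • â_k‖ < a` as soon as
`‖x‖² < 2 a ⟪x, â_k⟫`. Since `x ⟂ â_0`, `⟪x, â_k⟫ = ± ‖x‖ sin (2kθ)`; taking `k = ⌊m/2⌋` or the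
opposite edge `k + m` makes it `‖x‖ sin (2kθ)` with `2 a sin (2kθ) > 1`, while `‖x‖² ≤ ‖x‖`
because `P_n` lies in the unit disc. -/

open RealInnerProductSpace

lemma doubleDist_le_of_mem_frontier {P : Set E2} {z : E2} (hz : z ∈ frontier P) (x y : E2) :
    doubleDist P (false, x) (true, y) ≤ ‖x - z‖ + ‖z - y‖ :=
  csInf_le ⟨0, by rintro _ ⟨_, _, rfl⟩; positivity⟩ ⟨z, hz, rfl⟩

lemma mem_frontier_of_forall_inner_le {E : Type*} [NormedAddCommGroup E] [InnerProductSpace ℝ E]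
    {s : Set E} {z u : E} (hz : z ∈ s) (hu : u ≠ 0) (hmax : ∀ y ∈ s, ⟪y, u⟫ ≤ ⟪z, u⟫) :
    z ∈ frontier s := by
  refine ⟨subset_closure hz, fun hint => ?_⟩
  have hline : Filter.Tendsto (fun ε : ℝ => z + ε • u) (nhdsWithin 0 (Set.Ioi 0)) (nhds z) := by
    have : Continuous (fun ε : ℝ => z + ε • u) := by fun_prop
    simpa using (this.tendsto 0).mono_left nhdsWithin_le_nhds
  obtain ⟨ε, hεs, hε⟩ :=
    ((hline.eventually_mem (mem_interior_iff_mem_nhds.mp hint)).and self_mem_nhdsWithin).exists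
  have := hmax _ hεs
  rw [inner_add_left, real_inner_smul_left, real_inner_self_eq_norm_sq] at this
  have : 0 < ‖u‖ ^ 2 := by positivity
  nlinarith [show (0 : ℝ) < ε from hε]

lemma norm_sub_smul_lt_of_norm_sq_lt {E : Type*} [NormedAddCommGroup E] [InnerProductSpace ℝ E]
    {x u : E} {a : ℝ} (hu : ‖u‖ = 1) (ha : 0 < a) (h : ‖x‖ ^ 2 < 2 * a * ⟪x, u⟫) :
    ‖x - a • u‖ < a := by
  have : ‖x - a • u‖ ^ 2 < a ^ 2 := by
    rw [norm_sub_sq_real, norm_smul, hu, real_inner_smul_right, Real.norm_of_nonneg ha.le]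
    linarith
  exact (sq_lt_sq₀ (norm_nonneg _) ha.le).mp this

lemma sin_int_mul_pi_div_mul_sin_succ_nonneg {n : ℕ} (hn : 0 < n) (l : ℤ) :
    0 ≤ sin (l * π / n) * sin ((l + 1) * π / n) := by
  -- Reducing `l` modulo `n` puts both angles in `[0, π]`, up to the same shift by `q * π`.
  obtain ⟨q, r, hr0, hrn, rfl⟩ : ∃ q r : ℤ, 0 ≤ r ∧ r < n ∧ l = r + q * n :=
    ⟨l / n, l % n, Int.emod_nonneg _ (by omega), Int.emod_lt_of_pos l (by omega),
      by rw [add_comm, mul_comm]; exact (Int.mul_ediv_add_emod l n).symm⟩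
  have hnR : (0 : ℝ) < n := by exact_mod_cast hn
  have hr : (r : ℝ) + 1 ≤ n := by exact_mod_cast hrn
  have hshift : ∀ y : ℝ, (y + q * n) * π / n = y * π / n + q * π := fun y => by
    field_simp
  have hsin : ∀ y : ℝ, 0 ≤ y → y ≤ n → 0 ≤ sin (y * π / n) := fun y hy0 hyn =>
    sin_nonneg_of_nonneg_of_le_pi (by positivity) (by rw [div_le_iff₀ hnR]; nlinarith [pi_pos])
  push_cast
  rw [show (r : ℝ) + q * n + 1 = r + 1 + q * n by ring, hshift, hshift, sin_add_int_mul_pi,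
    sin_add_int_mul_pi, mul_mul_mul_comm, ← zpow_add₀ (by norm_num), Even.neg_one_zpow ⟨q, rfl⟩,
    one_mul]
  exact mul_nonneg (hsin r (by exact_mod_cast hr0) (by linarith))
    (hsin (r + 1) (by positivity) hr)

lemma cos_odd_mul_pi_div_le {n : ℕ} (hn : 0 < n) (l : ℤ) :
    cos ((2 * l - 1) * π / n) ≤ cos (π / n) := by
  have key := cos_sub_cos (π / n) ((2 * l - 1) * π / n)
  have h := sin_int_mul_pi_div_mul_sin_succ_nonneg hn (l - 1)
  rw [show (π / n + (2 * l - 1) * π / n) / 2 = ((l - 1 : ℤ) + 1) * π / n by push_cast; ring,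
    show (π / n - (2 * l - 1) * π / n) / 2 = -((l - 1 : ℤ) * π / n) by push_cast; ring,
    sin_neg] at key
  linarith

lemma inner_pt (x : E2) (c d : ℝ) : ⟪x, pt c d⟫ = x 0 * c + x 1 * d := by
  simp [PiLp.inner_apply, Fin.sum_univ_two, pt, mul_comm]

lemma norm_pt_cos_sin (α : ℝ) : ‖pt (cos α) (sin α)‖ = 1 := by
  simp [EuclideanSpace.norm_eq, Fin.sum_univ_two, pt]

lemma norm_sq_eq_inner_sq_add_inner_sq (x : E2) (α : ℝ) :
    ‖x‖ ^ 2 = ⟪x, pt (cos α) (sin α)⟫ ^ 2 + ⟪x, pt (-sin α) (cos α)⟫ ^ 2 := by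
  rw [EuclideanSpace.norm_sq_eq, inner_pt, inner_pt]
  simp only [Fin.sum_univ_two, Real.norm_eq_abs, sq_abs]
  linear_combination (x 0 ^ 2 + x 1 ^ 2) * (sin_sq_add_cos_sq α).symm

lemma inner_pt_cos_sin_add (x : E2) (α β : ℝ) :
    ⟪x, pt (cos (β + α)) (sin (β + α))⟫ =
      cos β * ⟪x, pt (cos α) (sin α)⟫ + sin β * ⟪x, pt (-sin α) (cos α)⟫ := by
  simp only [inner_pt, cos_add, sin_add]
  ring

def vertex (n j : ℕ) : E2 := pt (cos (2 * π * j / n)) (sin (2 * π * j / n))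

lemma vertex_mem_Pgon {n : ℕ} (hn : 0 < n) (j : ℕ) : vertex n j ∈ Pgon n := by
  refine subset_convexHull ℝ _ ⟨⟨j % n, Nat.mod_lt _ hn⟩, ?_⟩
  have hj : 2 * π * j / n = 2 * π * (j % n : ℕ) / n + (j / n : ℕ) * (2 * π) := by
    have hnR : (n : ℝ) ≠ 0 := by positivity
    conv_lhs => rw [← Nat.mod_add_div j n]
    push_cast
    field_simp
  simp only [vertex, hj, cos_add_nat_mul_two_pi, sin_add_nat_mul_two_pi]

lemma Pgon_subset_closedBall (n : ℕ) : Pgon n ⊆ Metric.closedBall 0 1 := by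
  refine convexHull_min ?_ (convex_closedBall 0 1)
  rintro _ ⟨j, rfl⟩
  simp [norm_pt_cos_sin]

lemma norm_outNormal (n k : ℕ) : ‖outNormal n k‖ = 1 := norm_pt_cos_sin _

lemma inner_vertex_outNormal (n j k : ℕ) :
    ⟪vertex n j, outNormal n k⟫ = cos ((2 * (((j : ℤ) - k : ℤ) : ℝ) - 1) * π / n) := by
  rw [vertex, outNormal, inner_pt]
  simp only [pt, PiLp.toLp_apply, Matrix.cons_val_zero, Matrix.cons_val_one]
  rw [← cos_sub]
  push_cast
  ring_nf

lemma inner_outNormal_le_of_mem_Pgon {n : ℕ} (hn : 0 < n) (k : ℕ) {y : E2} (hy : y ∈ Pgon n) :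
    ⟪y, outNormal n k⟫ ≤ cos (π / n) := by
  have hhalf : Convex ℝ {y : E2 | ⟪y, outNormal n k⟫ ≤ cos (π / n)} :=
    convex_halfSpace_le ⟨fun a b => inner_add_left a b _, fun c a => real_inner_smul_left a _ c⟩ _
  refine convexHull_min ?_ hhalf hy
  rintro _ ⟨j, rfl⟩
  exact (inner_vertex_outNormal n j k).trans_le (cos_odd_mul_pi_div_le hn _)

lemma cos_smul_outNormal_eq_midpoint {n : ℕ} (hn : 0 < n) (k : ℕ) :
    cos (π / n) • outNormal n k = midpoint ℝ (vertex n k) (vertex n (k + 1)) := by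
  have hk : 2 * π * k / n = (2 * k + 1) * π / n - π / n := by field_simp; ring
  have hk' : 2 * π * (k + 1 : ℕ) / n = (2 * k + 1) * π / n + π / n := by
    push_cast; field_simp; ring
  rw [midpoint_eq_smul_add, vertex, vertex, hk, hk', outNormal]
  ext i
  fin_cases i <;> simp [pt, cos_add, cos_sub, sin_add, sin_sub] <;> ring

lemma cos_smul_outNormal_mem_frontier {n : ℕ} (hn : 0 < n) (k : ℕ) :
    cos (π / n) • outNormal n k ∈ frontier (Pgon n) := by
  refine mem_frontier_of_forall_inner_le (u := outNormal n k) ?_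
    (ne_zero_of_norm_ne_zero (by simp [norm_outNormal])) fun y hy => ?_
  · rw [cos_smul_outNormal_eq_midpoint hn]
    exact (convex_convexHull ℝ _).segment_subset (vertex_mem_Pgon hn k)
      (vertex_mem_Pgon hn (k + 1)) (midpoint_mem_segment _ _)
  · rw [real_inner_smul_left, real_inner_self_eq_norm_sq, norm_outNormal, one_pow, mul_one]
    exact inner_outNormal_le_of_mem_Pgon hn k hy

lemma one_lt_two_cos_mul_sin {m n : ℕ} (hm : 2 ≤ m) (hn : n = 2 * m) :
    1 < 2 * cos (π / n) * sin (2 * (m / 2 : ℕ) * π / n) := by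
  subst hn
  obtain ⟨c, rfl | rfl⟩ := Nat.even_or_odd' m
  · have hc : (2 : ℝ) ≤ 2 * c := by exact_mod_cast hm
    have hc0 : (c : ℝ) ≠ 0 := (by linarith : (0 : ℝ) < c).ne'
    rw [show 2 * c / 2 = c by omega, show 2 * (c : ℝ) * π / (2 * (2 * c) : ℕ) = π / 2 by
      push_cast; field_simp, sin_pi_div_two, mul_one]
    have : cos (π / 3) < cos (π / (2 * (2 * c) : ℕ)) := by
      refine cos_lt_cos_of_nonneg_of_le_pi_div_two (by positivity) (by linarith [pi_pos]) ?_
      push_cast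
      exact div_lt_div_of_pos_left pi_pos (by norm_num) (by linarith)
    linarith [cos_pi_div_three]
  · have hc : (1 : ℝ) ≤ c := by exact_mod_cast (by omega : 1 ≤ c)
    rw [show (2 * c + 1) / 2 = c by omega, show 2 * (c : ℝ) * π / (2 * (2 * c + 1) : ℕ) =
      π / 2 - π / (2 * (2 * c + 1) : ℕ) by push_cast; field_simp; ring, sin_pi_div_two_sub]
    have : 0 < cos (2 * (π / (2 * (2 * c + 1) : ℕ))) := by
      refine cos_pos_of_mem_Ioo ⟨by linarith [show 0 < π / (2 * (2 * c + 1) : ℕ) by positivity,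
        pi_pos], ?_⟩
      push_cast
      rw [mul_div_assoc', div_lt_div_iff₀ (by positivity) two_pos]
      nlinarith [pi_pos]
    nlinarith [cos_sq (π / (2 * (2 * c + 1) : ℕ))]

lemma exists_norm_sq_lt_two_cos_mul_inner_outNormal {m n : ℕ} (hm : 2 ≤ m) (hn : n = 2 * m)
    {x : E2} (hx : x ∈ Pgon n) (hperp : ⟪x, pt (cos (π / n)) (sin (π / n))⟫ = 0) (hx0 : x ≠ 0) :
    ∃ k, ‖x‖ ^ 2 < 2 * cos (π / n) * ⟪x, outNormal n k⟫ := by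
  set τ := ⟪x, pt (-sin (π / n)) (cos (π / n))⟫
  have hnorm : ‖x‖ = |τ| := by
    rw [← sqrt_sq (norm_nonneg x), norm_sq_eq_inner_sq_add_inner_sq x (π / n), hperp,
      zero_pow two_ne_zero, zero_add, sqrt_sq_eq_abs]
  have hinner (k : ℕ) : ⟪x, outNormal n k⟫ = sin (2 * k * π / n) * τ := by
    rw [outNormal, show (2 * k + 1) * π / n = 2 * k * π / n + π / n by ring,
      inner_pt_cos_sin_add, hperp, mul_zero, zero_add]
  -- The opposite edges `m / 2` and `m / 2 + m`: one of them faces the side where `x` lies.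
  obtain ⟨k, hk⟩ : ∃ k : ℕ, sin (2 * k * π / n) * τ = sin (2 * (m / 2 : ℕ) * π / n) * |τ| := by
    rcases le_or_gt 0 τ with hτ | hτ
    · exact ⟨m / 2, by rw [abs_of_nonneg hτ]⟩
    · refine ⟨m / 2 + m, ?_⟩
      rw [abs_of_neg hτ, show 2 * ((m / 2 + m : ℕ) : ℝ) * π / n = 2 * (m / 2 : ℕ) * π / n + π by
        rw [hn]; push_cast; field_simp, sin_add_pi]
      ring
  have hpos : 0 < ‖x‖ := norm_pos_iff.mpr hx0
  have hle : ‖x‖ ≤ 1 := by simpa using Pgon_subset_closedBall n hx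
  have hS := one_lt_two_cos_mul_sin hm hn
  refine ⟨k, ?_⟩
  rw [hinner, hk, ← hnorm]
  nlinarith

open RealInnerProductSpace in
/-- For `n = 2m` even (`m ≥ 2`), an off-center point `x ≠ 0` of the regular
`n`-gon lying on the line through the center halfway between two parallel
edges (i.e. `⟪x, â⟫ = 0` for the edge normal `â`) has its two copies on
opposite faces of the double at distance strictly less than `w`:
`D((0,x),(1,x)) < w`. -/
theorem offcenter_halfway_points_closer_than_width
    (m n : ℕ) (hm : 2 ≤ m) (hn : n = 2 * m)
    (a w : ℝ) (ha : a = Real.cos (π / n)) (hw : w = 2 * a)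
    (ahat : E2) (hahat : ahat = pt (Real.cos (π / n)) (Real.sin (π / n)))
    (x : E2) (hx : x ∈ Pgon n) (hperp : ⟪x, ahat⟫ = 0) (hx0 : x ≠ 0) :
    doubleDist (Pgon n) (false, x) (true, x) < w := by
  subst ha hw hahat
  obtain ⟨k, hk⟩ := exists_norm_sq_lt_two_cos_mul_inner_outNormal hm hn hx hperp hx0
  have hcos : 0 < cos (π / n) := by
    have hn4 : (4 : ℝ) ≤ n := by exact_mod_cast (by omega : 4 ≤ n)
    refine cos_pos_of_mem_Ioo ⟨by linarith [pi_pos, show 0 < π / n by positivity], ?_⟩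
    rw [div_lt_div_iff₀ (by positivity) two_pos]
    nlinarith [pi_pos]
  have hclose := norm_sub_smul_lt_of_norm_sq_lt (norm_outNormal n k) hcos hk
  calc doubleDist (Pgon n) (false, x) (true, x)
      ≤ ‖x - cos (π / n) • outNormal n k‖ + ‖cos (π / n) • outNormal n k - x‖ :=
        doubleDist_le_of_mem_frontier (cos_smul_outNormal_mem_frontier (by omega) k) x x
    _ < 2 * cos (π / n) := by rw [norm_sub_rev _ x]; linarith
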